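/- arXiv:2103.05362 — 2 statements merged into one kernel-verified Lean document; each statement's English description precedes it below -/
import Mathlib

section
/- For any real p×p matrices X and E, the matrix exponential of the 2p×2p block upper-triangular matrix [[X, E], [0, X]] equals the block matrix [[exp(X), L], [0, exp(X)]], where L is the Fréchet derivative of the matrix exponential at X applied to E, i.e., L = D exp(X)[E]. -/
open Matrix

attribute [local instance] Matrix.frobeniusNormedAddCommGroup Matrix.frobeniusNormedSpace

/-!
Conjugating `diag(X + tE, X)` by the unipotent matrix `[[1, -t⁻¹], [0, 1]]` gives
`[[X + tE, E], [0, X]]`, and exponentials commute with conjugation; so for `t ≠ 0` the top-right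
block of `exp [[X + tE, E], [0, X]]` is the difference quotient `t⁻¹ (exp (X + tE) - exp X)`.
Letting `t → 0`, continuity of `exp` and its differentiability at `X` give the theorem.
-/

open NormedSpace Filter Topology

attribute [local instance] Matrix.frobeniusNormedRing Matrix.frobeniusNormedAlgebra

theorem HasSum.matrix_fromBlocks {ι l m n o R : Type*} [AddCommMonoid R] [TopologicalSpace R]
    {A : ι → Matrix n l R} {B : ι → Matrix n m R} {C : ι → Matrix o l R} {D : ι → Matrix o m R}
    {a : Matrix n l R} {b : Matrix n m R} {c : Matrix o l R} {d : Matrix o m R}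
    (hA : HasSum A a) (hB : HasSum B b) (hC : HasSum C c) (hD : HasSum D d) :
    HasSum (fun i => fromBlocks (A i) (B i) (C i) (D i)) (fromBlocks a b c d) := by
  refine Pi.hasSum.2 fun i => Pi.hasSum.2 fun j => ?_
  rcases i with i | i <;> rcases j with j | j
  · exact Pi.hasSum.1 (Pi.hasSum.1 hA i) j
  · exact Pi.hasSum.1 (Pi.hasSum.1 hB i) j
  · exact Pi.hasSum.1 (Pi.hasSum.1 hC i) j
  · exact Pi.hasSum.1 (Pi.hasSum.1 hD i) j

namespace Matrix

section CommRing

variable {m R : Type*} [Fintype m] [DecidableEq m] [CommRing R]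

theorem fromBlocks_smul_sub_eq_conj (Y X : Matrix m m R) (c : R) :
    fromBlocks Y (c • (X - Y)) 0 X =
      fromBlocks 1 (c • 1) 0 1 * fromBlocks Y 0 0 X * fromBlocks 1 (-c • 1) 0 1 := by
  simp [fromBlocks_multiply, sub_eq_neg_add]

theorem fromBlocks_one_smul_one_mul_neg (c : R) :
    fromBlocks 1 (c • 1) 0 1 * fromBlocks 1 (-c • 1) 0 1 = (1 : Matrix (m ⊕ m) (m ⊕ m) R) := by
  simp [fromBlocks_multiply, fromBlocks_one]

end CommRing

variable {m n 𝕂 : Type*} [RCLike 𝕂] [Fintype m] [DecidableEq m] [Fintype n] [DecidableEq n]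

theorem exp_fromBlocks_zero_zero (A : Matrix m m 𝕂) (B : Matrix n n 𝕂) :
    exp (fromBlocks A 0 0 B) = fromBlocks (exp A) 0 0 (exp B) := by
  -- instance search hits its size limit on this Frobenius-normed space
  have := FiniteDimensional.proper_rclike 𝕂 (Matrix (m ⊕ n) (m ⊕ n) 𝕂)
  refine (exp_series_hasSum_exp' (𝕂 := 𝕂) (fromBlocks A 0 0 B)).unique ?_
  have h := (exp_series_hasSum_exp' (𝕂 := 𝕂) A).matrix_fromBlocks hasSum_zero hasSum_zero
    (exp_series_hasSum_exp' (𝕂 := 𝕂) B)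
  simp only [fromBlocks_diagonal_pow, fromBlocks_smul, smul_zero]
  exact h

theorem exp_fromBlocks_smul_sub (Y X : Matrix m m 𝕂) (c : 𝕂) :
    exp (fromBlocks Y (c • (X - Y)) 0 X) =
      fromBlocks (exp Y) (c • (exp X - exp Y)) 0 (exp X) := by
  let U : (Matrix (m ⊕ m) (m ⊕ m) 𝕂)ˣ :=
    ⟨fromBlocks 1 (c • 1) 0 1, fromBlocks 1 (-c • 1) 0 1, fromBlocks_one_smul_one_mul_neg c,
      by simpa using fromBlocks_one_smul_one_mul_neg (m := m) (-c)⟩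
  rw [fromBlocks_smul_sub_eq_conj, fromBlocks_smul_sub_eq_conj]
  exact (exp_units_conj U _).trans (by rw [exp_fromBlocks_zero_zero]; rfl)

theorem exp_fromBlocks_add_smul (X E : Matrix m m 𝕂) {t : 𝕂} (ht : t ≠ 0) :
    exp (fromBlocks (X + t • E) E 0 X) =
      fromBlocks (exp (X + t • E)) (t⁻¹ • (exp (X + t • E) - exp X)) 0 (exp X) := by
  have h := exp_fromBlocks_smul_sub (X + t • E) X (-t⁻¹)
  rwa [sub_add_cancel_left, neg_smul, smul_neg, neg_neg, inv_smul_smul₀ ht, neg_smul,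
    ← smul_neg, neg_sub] at h

theorem hasDerivAt_exp_add_smul (X E : Matrix m m 𝕂) :
    HasDerivAt (fun t : 𝕂 => exp (X + t • E)) (fderiv 𝕂 exp X E) 0 := by
  refine (exp_analytic X).differentiableAt.hasFDerivAt.comp_hasDerivAt_of_eq 0 ?_ (by simp)
  simpa using ((hasDerivAt_id (0 : 𝕂)).smul_const E).const_add X

theorem exp_fromBlocks_eq_fderiv (X E : Matrix m m 𝕂) :
    exp (fromBlocks X E 0 X) = fromBlocks (exp X) (fderiv 𝕂 exp X E) 0 (exp X) := by
  have := FiniteDimensional.proper_rclike 𝕂 (Matrix (m ⊕ m) (m ⊕ m) 𝕂)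
  have hderiv := hasDerivAt_exp_add_smul X E
  have hlhs : Tendsto (fun t : 𝕂 => exp (fromBlocks (X + t • E) E 0 X)) (𝓝[≠] 0)
      (𝓝 (exp (fromBlocks X E 0 X))) := by
    refine (Continuous.tendsto' ?_ 0 _ (by simp)).mono_left nhdsWithin_le_nhds
    exact exp_continuous.comp ((continuous_const.add (continuous_id.smul continuous_const))
      |>.matrix_fromBlocks continuous_const continuous_const continuous_const)
  have hrhs : Tendsto
      (fun t : 𝕂 => fromBlocks (exp (X + t • E)) (t⁻¹ • (exp (X + t • E) - exp X)) 0 (exp X))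
      (𝓝[≠] 0) (𝓝 (fromBlocks (exp X) (fderiv 𝕂 exp X E) 0 (exp X))) := by
    have hexp := hderiv.continuousAt.tendsto.mono_left (nhdsWithin_le_nhds (s := {0}ᶜ))
    have hslope := hderiv.tendsto_slope_zero
    simp only [zero_add, zero_smul, add_zero] at hexp hslope
    exact ((continuous_fst.matrix_fromBlocks continuous_snd continuous_const
      continuous_const).tendsto _).comp (hexp.prodMk_nhds hslope)
  refine tendsto_nhds_unique hlhs (hrhs.congr' ?_)
  filter_upwards [self_mem_nhdsWithin] with t ht
  exact (exp_fromBlocks_add_smul X E ht).symm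

end Matrix

/-- The matrix exponential of the block upper-triangular matrix `[[X, E], [0, X]]` is
`[[exp X, L], [0, exp X]]`, where `L = D exp(X)[E]` is the Fréchet derivative of the matrix
exponential at `X` applied to `E`. -/
theorem exp_fromBlocks_eq {p : ℕ} (X E : Matrix (Fin p) (Fin p) ℝ) :
    NormedSpace.exp (Matrix.fromBlocks X E 0 X) =
      Matrix.fromBlocks (NormedSpace.exp X)
        (fderiv ℝ (NormedSpace.exp) X E) 0 (NormedSpace.exp X) :=
  Matrix.exp_fromBlocks_eq_fderiv X E
end

section
/- The geometry-aware singularity index with spherical reference ellipsoid decreases as the manipulability ellipsoid grows (in the Loewner order) while remaining dominated by the reference sphere: for every real number k > 0 and all real symmetric positive definite p×p matrices M₁ and M₂ such that M₂ − M₁ is positive semidefinite and k·I − M₂ is positive semidefinite, one has d(k·I, M₂) ≤ d(k·I, M₁). -/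
open Matrix

attribute [local instance] Matrix.frobeniusNormedAddCommGroup Matrix.frobeniusNormedSpace

noncomputable def sqrtPD {p : ℕ} (S : Matrix (Fin p) (Fin p) ℝ) : Matrix (Fin p) (Fin p) ℝ :=
  letI := Classical.dec S.PosSemidef
  if h : S.PosSemidef then
    h.1.eigenvectorUnitary.1 * diagonal ((↑) ∘ (√·) ∘ h.1.eigenvalues) *
      (star h.1.eigenvectorUnitary : Matrix (Fin p) (Fin p) ℝ)
  else 0

/-- The matrix logarithm, defined via the spectral (continuous) functional calculus by
applying the real logarithm to the eigenvalues. -/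
noncomputable def matLog {p : ℕ} (M : Matrix (Fin p) (Fin p) ℝ) : Matrix (Fin p) (Fin p) ℝ :=
  cfc Real.log M

/-- The affine-invariant Riemannian distance
`d(Σ, Λ) = ‖log (Σ^{-1/2} Λ Σ^{-1/2})‖_F` (Frobenius norm). -/
noncomputable def affDist {p : ℕ} (S L : Matrix (Fin p) (Fin p) ℝ) : ℝ :=
  ‖matLog ((sqrtPD S)⁻¹ * L * (sqrtPD S)⁻¹)‖

/-!
Because `sqrtPD (k • 1) = √k • 1`, the distance `affDist (k • 1) M` is the Frobenius norm of
`log (k⁻¹ • M)`. For `A = k⁻¹ • M₁ ≤ B = k⁻¹ • M₂ ≤ 1`, operator monotonicity of the logarithm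
gives `log A ≤ log B ≤ log 1 = 0`, so `0 ≤ -log B ≤ -log A`. The Frobenius norm is monotone on
positive semidefinite matrices: for `0 ≤ X ≤ Y`,
`‖Y‖² - ‖X‖² = tr (X (Y - X)) + tr ((Y - X) Y)`, and the trace of a product of two positive
semidefinite matrices is nonnegative.
-/

open scoped MatrixOrder ComplexOrder

namespace Matrix

variable {n : Type*} [Fintype n]

lemma PosSemidef.of_map_ofReal {M : Matrix n n ℝ}
    (hM : (M.map (↑) : Matrix n n ℂ).PosSemidef) : M.PosSemidef := by
  rw [posSemidef_iff_dotProduct_mulVec] at hM ⊢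
  refine ⟨?_, fun x => ?_⟩
  · ext i j
    simpa using congrFun (congrFun hM.1 i) j
  · have hx := hM.2 (fun i => (x i : ℂ))
    simp only [dotProduct, mulVec, map_apply, Pi.star_apply, Complex.star_def,
      Complex.conj_ofReal] at hx ⊢
    exact_mod_cast hx

lemma frobenius_norm_sq_eq_trace (X : Matrix n n ℝ) : ‖X‖ ^ 2 = (Xᵀ * X).trace := by
  rw [frobenius_norm_def, ← Real.rpow_natCast, ← Real.rpow_mul (by positivity), Finset.sum_comm]
  simp [trace, mul_apply, sq]

variable [DecidableEq n]

noncomputable def ofRealStarAlgHom : Matrix n n ℝ →⋆ₐ[ℝ] Matrix n n ℂ :=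
  { Complex.ofRealAm.mapMatrix with map_star' := fun M => by ext; simp }

lemma ofRealStarAlgHom_apply (M : Matrix n n ℝ) : ofRealStarAlgHom M = M.map (↑) := rfl

lemma continuous_ofRealStarAlgHom :
    Continuous (ofRealStarAlgHom : Matrix n n ℝ → Matrix n n ℂ) :=
  continuous_id.matrix_map Complex.continuous_ofReal

/-- Real matrices do not form a C⋆-algebra, so `CFC.log_le_log` is applied to complex matrices
and pulled back along the entrywise embedding, which commutes with the functional calculus. -/
lemma cfc_log_le_cfc_log {A B : Matrix n n ℝ} (hA : A.PosDef) (hAB : A ≤ B) :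
    cfc Real.log A ≤ cfc Real.log B := by
  have hA' := hA.isStrictlyPositive
  have hB : IsSelfAdjoint B := by simpa using hA'.isSelfAdjoint.add hAB.isHermitian
  let φ : Matrix n n ℝ →⋆ₐ[ℝ] Matrix n n ℂ := ofRealStarAlgHom
  have hφ : Continuous φ := continuous_ofRealStarAlgHom
  have hφA : IsStrictlyPositive (φ A) := ⟨map_nonneg φ hA'.nonneg, hA'.isUnit.map φ⟩
  open scoped Matrix.Norms.L2Operator in
  have hlog : CFC.log (φ A) ≤ CFC.log (φ B) := CFC.log_le_log (OrderHomClass.mono φ hAB)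
  refine PosSemidef.of_map_ofReal ?_
  rw [← ofRealStarAlgHom_apply, map_sub,
    φ.map_cfc Real.log A (finite_real_spectrum.continuousOn _),
    φ.map_cfc Real.log B (finite_real_spectrum.continuousOn _) hφ hB (hB.map φ)]
  exact hlog

lemma trace_mul_nonneg {X Y : Matrix n n ℝ} (hX : 0 ≤ X) (hY : 0 ≤ Y) :
    0 ≤ (X * Y).trace := by
  obtain ⟨S, rfl⟩ := CStarAlgebra.nonneg_iff_eq_star_mul_self.mp hX
  rw [star_eq_conjTranspose, Matrix.mul_assoc, trace_mul_comm]
  exact ((nonneg_iff_posSemidef.mp hY).mul_mul_conjTranspose_same S).trace_nonneg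

lemma frobenius_norm_le_of_nonneg_of_le {X Y : Matrix n n ℝ} (hX : 0 ≤ X) (hXY : X ≤ Y) :
    ‖X‖ ≤ ‖Y‖ := by
  have hY : 0 ≤ Y := hX.trans hXY
  have hYX : 0 ≤ Y - X := sub_nonneg.mpr hXY
  have hsymm {Z : Matrix n n ℝ} (hZ : 0 ≤ Z) : Zᵀ = Z := by
    rw [← conjTranspose_eq_transpose_of_trivial]
    exact hZ.isSelfAdjoint.star_eq
  have h₁ := trace_mul_nonneg hX hYX
  have h₂ := trace_mul_nonneg hYX hY
  rw [Matrix.mul_sub, trace_sub] at h₁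
  rw [Matrix.sub_mul, trace_sub, trace_mul_comm] at h₂
  refine (pow_le_pow_iff_left₀ (norm_nonneg X) (norm_nonneg Y) two_ne_zero).mp ?_
  rw [frobenius_norm_sq_eq_trace, frobenius_norm_sq_eq_trace, hsymm hX, hsymm hY]
  linarith

end Matrix

lemma sqrtPD_eq_cfc {p : ℕ} {S : Matrix (Fin p) (Fin p) ℝ} (hS : S.PosSemidef) :
    sqrtPD S = cfc Real.sqrt S := by
  rw [sqrtPD, dif_pos hS, hS.1.cfc_eq, IsHermitian.cfc, Unitary.conjStarAlgAut_apply]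
  rfl

lemma sqrtPD_smul_one {p : ℕ} {k : ℝ} (hk : 0 ≤ k) :
    sqrtPD (k • 1 : Matrix (Fin p) (Fin p) ℝ) = √k • 1 := by
  rw [sqrtPD_eq_cfc (PosSemidef.one.smul hk), ← Algebra.algebraMap_eq_smul_one,
    ← Algebra.algebraMap_eq_smul_one, cfc_algebraMap]

lemma affDist_smul_one_left {p : ℕ} {k : ℝ} (hk : 0 < k) (M : Matrix (Fin p) (Fin p) ℝ) :
    affDist (k • 1) M = ‖matLog (k⁻¹ • M)‖ := by
  have hsqrt : (√k • 1 : Matrix (Fin p) (Fin p) ℝ)⁻¹ = (√k)⁻¹ • 1 := by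
    refine inv_eq_left_inv ?_
    rw [smul_mul_smul_comm, inv_mul_cancel₀ (by positivity), one_mul, one_smul]
  rw [affDist, sqrtPD_smul_one hk.le, hsqrt, smul_mul_assoc, one_mul, mul_smul_one, smul_smul,
    ← mul_inv, Real.mul_self_sqrt hk.le]

/-- The geometry-aware singularity index with spherical reference decreases as the
manipulability ellipsoid grows in the Loewner order while staying dominated by `k·I`. -/
theorem affDist_smul_one_antitone {p : ℕ} (k : ℝ) (hk : 0 < k)
    (M₁ M₂ : Matrix (Fin p) (Fin p) ℝ) (hM₁ : M₁.PosDef) (hM₂ : M₂.PosDef)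
    (h₁₂ : (M₂ - M₁).PosSemidef)
    (h₂k : (k • (1 : Matrix (Fin p) (Fin p) ℝ) - M₂).PosSemidef) :
    affDist (k • (1 : Matrix (Fin p) (Fin p) ℝ)) M₂ ≤
      affDist (k • (1 : Matrix (Fin p) (Fin p) ℝ)) M₁ := by
  have hk' : 0 < k⁻¹ := inv_pos.mpr hk
  have hA : (k⁻¹ • M₁).PosDef := hM₁.smul hk'
  have hAB : k⁻¹ • M₁ ≤ k⁻¹ • M₂ := smul_le_smul_of_nonneg_left (α := ℝ) h₁₂ hk'.le
  have hB1 : k⁻¹ • M₂ ≤ 1 := by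
    simpa [inv_smul_smul₀ hk.ne'] using
      smul_le_smul_of_nonneg_left (b₁ := M₂) (b₂ := k • 1) h₂k hk'.le
  have hlogAB : matLog (k⁻¹ • M₁) ≤ matLog (k⁻¹ • M₂) := Matrix.cfc_log_le_cfc_log hA hAB
  have hlogB : matLog (k⁻¹ • M₂) ≤ 0 := by
    simpa [matLog] using Matrix.cfc_log_le_cfc_log (hM₂.smul hk') hB1
  rw [affDist_smul_one_left hk, affDist_smul_one_left hk, ← norm_neg, ← norm_neg (matLog _)]
  exact Matrix.frobenius_norm_le_of_nonneg_of_le (neg_nonneg.mpr hlogB) (neg_le_neg hlogAB)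
end
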